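/- arXiv:math/0509393 — 6 statements merged into one kernel-verified Lean document; each statement's English description precedes it below -/
import Mathlib

section
/- Every maximal isotropic subspace L of V ⊕ V* is uniquely determined by the pair (ρ(L), Ω), where ρ(L) is the projection of L to V and Ω is the 2-form on ρ(L) defined by Ω(X,Y) = ξ(Y) for any X+ξ ∈ L with Y ∈ ρ(L); i.e., L = {X + ξ | X ∈ ρ(L), ξ(Y) = Ω(X,Y) for all Y ∈ ρ(L)}. -/
open Module LinearMap

/-- The symmetric pairing `⟨X+ξ, Y+η⟩ = (ξ(Y) + η(X))/2` on `V ⊕ V*`. -/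
noncomputable def pair (V : Type) [AddCommGroup V] [Module ℝ V] :
    LinearMap.BilinForm ℝ (V × Module.Dual ℝ V) :=
  LinearMap.mk₂ ℝ (fun u v => (u.2 v.1 + v.2 u.1) / 2)
    (by intro m₁ m₂ n; simp; ring)
    (by intro c m n; simp [smul_eq_mul]; ring)
    (by intro m n₁ n₂; simp; ring)
    (by intro c m n; simp [smul_eq_mul]; ring)

set_option maxHeartbeats 1000000 in
/-- Every maximal isotropic subspace `L ⊆ V ⊕ V*` is determined by the pair
`(ρ(L), Ω)`: there exists a (skew-symmetric, well-defined) bilinear form `Ω`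
on the projection `ρ(L)` of `L` to `V` such that
`L = {X + ξ | X ∈ ρ(L), ξ(Y) = Ω(X,Y) for all Y ∈ ρ(L)}`. -/
theorem maximal_isotropic_determined_by_range_and_form
    (V : Type) [AddCommGroup V] [Module ℝ V] [FiniteDimensional ℝ V]
    (L : Submodule ℝ (V × Module.Dual ℝ V))
    (hiso : ∀ u ∈ L, ∀ v ∈ L, pair V u v = 0)
    (hdim : finrank ℝ L = finrank ℝ V) :
    ∃ Ω : (Submodule.map (LinearMap.fst ℝ V (Module.Dual ℝ V)) L) →ₗ[ℝ]
          (Submodule.map (LinearMap.fst ℝ V (Module.Dual ℝ V)) L) →ₗ[ℝ] ℝ,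
      (∀ x y, Ω x y = -Ω y x) ∧
      (∀ (X : V) (ξ : Module.Dual ℝ V),
        (X, ξ) ∈ L ↔
          ∃ hX : X ∈ Submodule.map (LinearMap.fst ℝ V (Module.Dual ℝ V)) L,
            ∀ Y : (Submodule.map (LinearMap.fst ℝ V (Module.Dual ℝ V)) L),
              ξ Y = Ω ⟨X, hX⟩ Y) := by
  classical
  set ρL := Submodule.map (LinearMap.fst ℝ V (Module.Dual ℝ V)) L with hρL
  set B := pair V with hB
  have hBapp : ∀ u v : V × Module.Dual ℝ V, B u v = (u.2 v.1 + v.2 u.1) / 2 := by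
    intro u v; rfl
  have hrefl : B.IsRefl := by
    intro u v h
    rw [hBapp] at h ⊢
    linarith
  -- Nondegeneracy
  have hsep : ∀ u : V × Module.Dual ℝ V, (∀ v, B u v = 0) → u = 0 := by
    intro u hu
    have h1 : u.2 = 0 := by
      ext y
      have := hu (y, 0)
      rw [hBapp] at this
      simp at this
      simpa using this
    have h2 : u.1 = 0 := by
      rw [← Module.forall_dual_apply_eq_zero_iff ℝ]
      intro η
      have := hu (0, η)
      rw [hBapp] at this
      simp at this
      simpa using this
    exact Prod.ext h2 h1
  have hnd : B.Nondegenerate := .ofSeparatingLeft (fun u hu => hsep u hu)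
  -- L equals its orthogonal complement
  have hle : L ≤ B.orthogonal L := by
    intro u hu
    rw [LinearMap.BilinForm.mem_orthogonal_iff]
    intro v hv
    exact hiso v hv u hu
  have hL : L = B.orthogonal L := by
    apply Submodule.eq_of_le_of_finrank_le hle
    rw [LinearMap.BilinForm.finrank_orthogonal hnd, hdim]
    have : finrank ℝ (V × Module.Dual ℝ V) = finrank ℝ V + finrank ℝ V := by
      rw [Module.finrank_prod, Subspace.dual_finrank_eq]
    omega
  -- key: membership test via orthogonality
  have hmem : ∀ w : V × Module.Dual ℝ V,
      (∀ v ∈ L, v.2 w.1 + w.2 v.1 = 0) → w ∈ L := by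
    intro w h
    rw [hL, LinearMap.BilinForm.mem_orthogonal_iff]
    intro v hv
    show B v w = 0
    rw [hBapp, h v hv]
    simp
  -- projection L → ρL and a section
  set f : L →ₗ[ℝ] ρL :=
    ((LinearMap.fst ℝ V (Module.Dual ℝ V)).comp L.subtype).codRestrict ρL
      (fun x => ⟨x.1, x.2, rfl⟩) with hf
  have hfsurj : LinearMap.range f = ⊤ := by
    rw [LinearMap.range_eq_top]
    rintro ⟨y, w, hw, hwy⟩
    exact ⟨⟨w, hw⟩, Subtype.ext hwy⟩
  obtain ⟨s, hs⟩ := f.exists_rightInverse_of_surjective hfsurj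
  have hsfst : ∀ x : ρL, ((s x : V × Module.Dual ℝ V)).1 = (x : V) := by
    intro x
    have := congrFun (congrArg DFunLike.coe hs) x
    exact congrArg Subtype.val this
  have hsL : ∀ x : ρL, ((s x : V × Module.Dual ℝ V)) ∈ L := fun x => (s x).2
  -- the form Ω
  set g : L →ₗ[ℝ] ρL →ₗ[ℝ] ℝ :=
    ρL.subtype.dualMap.comp ((LinearMap.snd ℝ V (Module.Dual ℝ V)).comp L.subtype) with hg
  refine ⟨g ∘ₗ s, ?_, ?_⟩
  · intro x y
    have h0 := hiso _ (hsL x) _ (hsL y)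
    rw [hBapp] at h0
    have hx := hsfst x
    have hy := hsfst y
    rw [hx, hy] at h0
    show ((s x : V × Module.Dual ℝ V)).2 (y : V) = -((s y : V × Module.Dual ℝ V)).2 (x : V)
    linarith
  · intro X ξ
    constructor
    · rintro hXL
      refine ⟨⟨(X, ξ), hXL, rfl⟩, ?_⟩
      intro Y
      obtain ⟨Z, hZ, hZY⟩ := Y.2
      have h1 := hiso _ hZ _ hXL
      have h2 := hiso _ hZ _ (hsL ⟨X, ⟨(X, ξ), hXL, rfl⟩⟩)
      rw [hBapp] at h1 h2
      simp only [LinearMap.fst_apply] at hZY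
      rw [hsfst ⟨X, ⟨(X, ξ), hXL, rfl⟩⟩] at h2
      show ξ (Y : V) =
        ((s ⟨X, ⟨(X, ξ), hXL, rfl⟩⟩ : V × Module.Dual ℝ V)).2 (Y : V)
      rw [← hZY]
      linarith
    · rintro ⟨hX, hΩ⟩
      apply hmem
      intro v hv
      have hv1 : v.1 ∈ ρL := ⟨v, hv, rfl⟩
      have h1 : ξ v.1 = ((s ⟨X, hX⟩ : V × Module.Dual ℝ V)).2 v.1 := hΩ ⟨v.1, hv1⟩
      have h2 := hiso _ hv _ (hsL ⟨X, hX⟩)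
      rw [hBapp] at h2
      rw [hsfst ⟨X, hX⟩] at h2
      show v.2 X + ξ v.1 = 0
      rw [h1]
      linarith
end

section
/- Conversely, given a direct sum decomposition (V ⊕ V*) ⊗ ℂ = E₊ ⊕ E₋ with E₊, E₋ maximal isotropic and E₋ = conjugate of E₊, the map defined as multiplication by i on E₊ and -i on E₋ is the complexification of a real endomorphism J of V ⊕ V* satisfying J² = -I and orthogonality with respect to the pairing. This yields a bijection between linear generalized complex structures on V and such splittings. -/
open Module LinearMap TensorProduct

set_option maxSynthPendingDepth 3

/-- The `ℂ`-bilinear extension of the pairing to `(V ⊕ V*) ⊗ ℂ`. -/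
noncomputable def pairC (V : Type) [AddCommGroup V] [Module ℝ V] :
    LinearMap.BilinForm ℂ (ℂ ⊗[ℝ] (V × Module.Dual ℝ V)) :=
  (pair V).baseChange ℂ

/-- Complex conjugation on `(V ⊕ V*) ⊗ ℂ`, fixing `V ⊕ V*`. -/
noncomputable def conjC (V : Type) [AddCommGroup V] [Module ℝ V] :
    ℂ ⊗[ℝ] (V × Module.Dual ℝ V) →ₗ[ℝ] ℂ ⊗[ℝ] (V × Module.Dual ℝ V) :=
  TensorProduct.map Complex.conjAe.toLinearEquiv.toLinearMap LinearMap.id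

section Aux
variable (V : Type) [AddCommGroup V] [Module ℝ V]

noncomputable def reT : ℂ ⊗[ℝ] (V × Module.Dual ℝ V) →ₗ[ℝ] (V × Module.Dual ℝ V) :=
  (TensorProduct.lid ℝ _).toLinearMap ∘ₗ TensorProduct.map Complex.reLm LinearMap.id

noncomputable def imT : ℂ ⊗[ℝ] (V × Module.Dual ℝ V) →ₗ[ℝ] (V × Module.Dual ℝ V) :=
  (TensorProduct.lid ℝ _).toLinearMap ∘ₗ TensorProduct.map Complex.imLm LinearMap.id

variable {V}

lemma reT_tmul (c : ℂ) (w : V × Module.Dual ℝ V) : reT V (c ⊗ₜ w) = c.re • w := by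
  simp [reT]

lemma imT_tmul (c : ℂ) (w : V × Module.Dual ℝ V) : imT V (c ⊗ₜ w) = c.im • w := by
  simp [imT]

lemma conjC_tmul (c : ℂ) (w : V × Module.Dual ℝ V) :
    conjC V (c ⊗ₜ w) = (starRingEnd ℂ c) ⊗ₜ w := by
  simp [conjC]

lemma conjC_conjC (u : ℂ ⊗[ℝ] (V × Module.Dual ℝ V)) : conjC V (conjC V u) = u := by
  induction u using TensorProduct.induction_on with
  | zero => simp
  | tmul c w => simp [conjC_tmul]
  | add x y hx hy => simp [map_add, hx, hy]

lemma conjC_smul (c : ℂ) (u : ℂ ⊗[ℝ] (V × Module.Dual ℝ V)) :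
    conjC V (c • u) = (starRingEnd ℂ c) • conjC V u := by
  induction u using TensorProduct.induction_on with
  | zero => simp
  | tmul d w => rw [smul_tmul', conjC_tmul, conjC_tmul, smul_tmul']; simp [smul_eq_mul]
  | add x y hx hy => simp only [smul_add, map_add, hx, hy]

lemma eq_re_add_im (u : ℂ ⊗[ℝ] (V × Module.Dual ℝ V)) :
    u = (1 : ℂ) ⊗ₜ reT V u + Complex.I ⊗ₜ imT V u := by
  induction u using TensorProduct.induction_on with
  | zero => simp
  | tmul c w =>
      rw [reT_tmul, imT_tmul, tmul_smul, tmul_smul, smul_tmul', smul_tmul',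
        ← add_tmul]
      congr 1
      rw [Complex.real_smul, Complex.real_smul, mul_one]
      exact (Complex.re_add_im c).symm
  | add x y hx hy =>
      rw [map_add, map_add, tmul_add, tmul_add]
      conv_lhs => rw [hx, hy]
      abel

lemma real_of_conj_fixed {u : ℂ ⊗[ℝ] (V × Module.Dual ℝ V)} (h : conjC V u = u) :
    u = (1 : ℂ) ⊗ₜ reT V u := by
  have h1 := eq_re_add_im u
  have h2 : conjC V u = (1 : ℂ) ⊗ₜ reT V u - Complex.I ⊗ₜ imT V u := by
    conv_lhs => rw [h1]
    rw [map_add, conjC_tmul, conjC_tmul]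
    simp [Complex.conj_I, neg_tmul, sub_eq_add_neg]
  rw [h] at h2
  have h3 : Complex.I ⊗ₜ[ℝ] imT V u = - (Complex.I ⊗ₜ[ℝ] imT V u) := by
    have := h1.symm.trans h2
    have h4 : (1 : ℂ) ⊗ₜ[ℝ] reT V u + Complex.I ⊗ₜ[ℝ] imT V u
        = (1 : ℂ) ⊗ₜ[ℝ] reT V u + -(Complex.I ⊗ₜ[ℝ] imT V u) := by
      rw [← sub_eq_add_neg]; exact this
    exact add_left_cancel h4
  have h5 : Complex.I ⊗ₜ[ℝ] imT V u = 0 := by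
    have h6 : (2:ℝ) • (Complex.I ⊗ₜ[ℝ] imT V u) = 0 := by
      rw [two_smul]; nth_rewrite 1 [h3]; exact neg_add_cancel _
    calc Complex.I ⊗ₜ[ℝ] imT V u
        = ((1/2 : ℝ) * 2) • (Complex.I ⊗ₜ[ℝ] imT V u) := by norm_num
      _ = (1/2 : ℝ) • ((2:ℝ) • (Complex.I ⊗ₜ[ℝ] imT V u)) := by rw [smul_smul]
      _ = 0 := by rw [h6, smul_zero]
  conv_lhs => rw [h1]
  rw [h5, add_zero]

end Aux

set_option maxHeartbeats 1000000 in
/-- Given a splitting `(V ⊕ V*) ⊗ ℂ = E₊ ⊕ E₋` with `E₊, E₋` maximal isotropic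
and `E₋` the conjugate of `E₊`, multiplication by `i` on `E₊` and by `-i` on
`E₋` is the complexification of a unique real endomorphism `J` of `V ⊕ V*`,
which is orthogonal and satisfies `J² = -I`; this gives the inverse of the
correspondence between linear generalized complex structures and splittings. -/
theorem splitting_gives_unique_gcs
    (V : Type) [AddCommGroup V] [Module ℝ V] [FiniteDimensional ℝ V]
    (Ep Em : Submodule ℂ (ℂ ⊗[ℝ] (V × Module.Dual ℝ V)))
    (hisop : ∀ u ∈ Ep, ∀ v ∈ Ep, pairC V u v = 0)
    (hisom : ∀ u ∈ Em, ∀ v ∈ Em, pairC V u v = 0)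
    (hdimp : finrank ℂ Ep = finrank ℝ V)
    (hdimm : finrank ℂ Em = finrank ℝ V)
    (hinf : Ep ⊓ Em = ⊥) (hsup : Ep ⊔ Em = ⊤)
    (hconj : conjC V '' (Ep : Set (ℂ ⊗[ℝ] (V × Module.Dual ℝ V))) =
      (Em : Set (ℂ ⊗[ℝ] (V × Module.Dual ℝ V)))) :
    ∃ J : (V × Module.Dual ℝ V) →ₗ[ℝ] (V × Module.Dual ℝ V),
      ((∀ u, J (J u) = -u) ∧
       (∀ u v, pair V (J u) (J v) = pair V u v) ∧
       (∀ u ∈ Ep, J.baseChange ℂ u = Complex.I • u) ∧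
       (∀ u ∈ Em, J.baseChange ℂ u = -(Complex.I • u))) ∧
      (∀ J' : (V × Module.Dual ℝ V) →ₗ[ℝ] (V × Module.Dual ℝ V),
        (∀ u ∈ Ep, J'.baseChange ℂ u = Complex.I • u) →
        (∀ u ∈ Em, J'.baseChange ℂ u = -(Complex.I • u)) → J' = J) := by
  classical
  have hc : IsCompl Ep Em := ⟨disjoint_iff.mpr hinf, codisjoint_iff.mpr hsup⟩
  set prP := Ep.linearProjOfIsCompl Em hc with hprPdef
  set prM := Em.linearProjOfIsCompl Ep hc.symm with hprMdef
  set K : ℂ ⊗[ℝ] (V × Module.Dual ℝ V) →ₗ[ℂ] ℂ ⊗[ℝ] (V × Module.Dual ℝ V) :=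
    Complex.I • (Ep.subtype ∘ₗ prP) + (-Complex.I) • (Em.subtype ∘ₗ prM) with hKdef
  have hdecomp : ∀ x, ((prP x : ℂ ⊗[ℝ] (V × Module.Dual ℝ V)) + (prM x : _)) = x :=
    fun x => Submodule.projection_add_projection_eq_self hc x
  have hKp : ∀ x ∈ Ep, K x = Complex.I • x := by
    intro x hx
    have h1 : prP x = ⟨x, hx⟩ := Submodule.linearProjOfIsCompl_apply_left hc ⟨x, hx⟩
    have h2 : prM x = 0 := Submodule.projectionOnto_apply_of_mem_right hc.symm hx
    simp [hKdef, LinearMap.add_apply, LinearMap.smul_apply, h1, h2]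
  have hKm : ∀ x ∈ Em, K x = -(Complex.I • x) := by
    intro x hx
    have h1 : prM x = ⟨x, hx⟩ := Submodule.linearProjOfIsCompl_apply_left hc.symm ⟨x, hx⟩
    have h2 : prP x = 0 := Submodule.projectionOnto_apply_of_mem_right hc hx
    simp [hKdef, LinearMap.add_apply, LinearMap.smul_apply, h1, h2]
  have hKK : ∀ x, K (K x) = -x := by
    intro x
    have hp : ((prP x : ℂ ⊗[ℝ] _)) ∈ Ep := (prP x).2
    have hm : ((prM x : ℂ ⊗[ℝ] _)) ∈ Em := (prM x).2
    have hx := hdecomp x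
    calc K (K x) = K (K ((prP x : _) + (prM x : _))) := by rw [hx]
      _ = K (Complex.I • (prP x : _)) + K (-(Complex.I • (prM x : _))) := by
          rw [map_add, hKp _ hp, hKm _ hm, map_add]
      _ = Complex.I • (Complex.I • (prP x : _)) - Complex.I • (-(Complex.I • (prM x : _))) := by
          rw [map_smul, hKp _ hp, map_neg, map_smul, hKm _ hm]
          rw [sub_eq_add_neg]
      _ = -((prP x : _) + (prM x : _)) := by
          rw [smul_smul, Complex.I_mul_I, smul_neg, smul_smul, Complex.I_mul_I]
          rw [neg_one_smul, neg_one_smul]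
          abel
      _ = -x := by rw [hx]
  have hconjP : ∀ x ∈ Ep, conjC V x ∈ Em := by
    intro x hx
    have : conjC V x ∈ conjC V '' (Ep : Set _) := Set.mem_image_of_mem _ hx
    rw [hconj] at this
    exact this
  have hconjM : ∀ x ∈ Em, conjC V x ∈ Ep := by
    intro x hx
    have hx' : x ∈ conjC V '' (Ep : Set _) := by rw [hconj]; exact hx
    obtain ⟨y, hy, rfl⟩ := hx'
    rw [conjC_conjC]
    exact hy
  have hKconj : ∀ x, conjC V (K x) = K (conjC V x) := by
    intro x
    have hp : ((prP x : ℂ ⊗[ℝ] _)) ∈ Ep := (prP x).2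
    have hm : ((prM x : ℂ ⊗[ℝ] _)) ∈ Em := (prM x).2
    have hx := hdecomp x
    calc conjC V (K x) = conjC V (K ((prP x : _) + (prM x : _))) := by rw [hx]
      _ = conjC V (Complex.I • (prP x : _)) + conjC V (-(Complex.I • (prM x : _))) := by
          rw [map_add, hKp _ hp, hKm _ hm, map_add]
      _ = -(Complex.I • conjC V (prP x : _)) + Complex.I • conjC V (prM x : _) := by
          rw [map_neg, conjC_smul, conjC_smul, Complex.conj_I]
          simp [neg_smul]
      _ = K (conjC V (prP x : _)) + K (conjC V (prM x : _)) := by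
          rw [hKm _ (hconjP _ hp), hKp _ (hconjM _ hm)]
      _ = K (conjC V x) := by rw [← map_add, ← map_add, hx]
  set J : (V × Module.Dual ℝ V) →ₗ[ℝ] (V × Module.Dual ℝ V) :=
    reT V ∘ₗ (K.restrictScalars ℝ) ∘ₗ ((TensorProduct.mk ℝ ℂ (V × Module.Dual ℝ V)) 1)
    with hJdef
  have hJapp : ∀ w, J w = reT V (K ((1 : ℂ) ⊗ₜ w)) := fun w => rfl
  have hKreal : ∀ w, K ((1 : ℂ) ⊗ₜ w) = (1 : ℂ) ⊗ₜ (J w) := by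
    intro w
    have hfix : conjC V (K ((1 : ℂ) ⊗ₜ w)) = K ((1 : ℂ) ⊗ₜ w) := by
      rw [hKconj, conjC_tmul]
      norm_num
    have := real_of_conj_fixed hfix
    rw [this, ← hJapp]
  have hinj : ∀ a b : V × Module.Dual ℝ V,
      (1 : ℂ) ⊗ₜ[ℝ] a = (1 : ℂ) ⊗ₜ[ℝ] b → a = b := by
    intro a b h
    have := congrArg (reT V) h
    simpa [reT_tmul] using this
  have hbase : ∀ u, J.baseChange ℂ u = K u := by
    intro u
    induction u using TensorProduct.induction_on with
    | zero => simp
    | tmul c w =>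
        have hcw : c ⊗ₜ[ℝ] w = c • ((1 : ℂ) ⊗ₜ[ℝ] w) := by
          rw [smul_tmul']; simp [smul_eq_mul]
        rw [LinearMap.baseChange_tmul, hcw, map_smul, hKreal, smul_tmul']
        simp [smul_eq_mul]
    | add x y hx hy => rw [map_add, map_add, hx, hy]
  refine ⟨J, ⟨?_, ?_, ?_, ?_⟩, ?_⟩
  · -- J² = -1
    intro u
    apply hinj
    rw [← hKreal, ← hKreal, hKK, tmul_neg]
  · -- orthogonality
    have hpairK : ∀ x y, pairC V (K x) (K y) = pairC V x y := by
      intro x y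
      have hpx : ((prP x : ℂ ⊗[ℝ] _)) ∈ Ep := (prP x).2
      have hmx : ((prM x : ℂ ⊗[ℝ] _)) ∈ Em := (prM x).2
      have hpy : ((prP y : ℂ ⊗[ℝ] _)) ∈ Ep := (prP y).2
      have hmy : ((prM y : ℂ ⊗[ℝ] _)) ∈ Em := (prM y).2
      have hx := hdecomp x
      have hy := hdecomp y
      calc pairC V (K x) (K y)
          = pairC V (K ((prP x : _) + (prM x : _))) (K ((prP y : _) + (prM y : _))) := by
            rw [hx, hy]
        _ = pairC V (Complex.I • (prP x : _) + -(Complex.I • (prM x : _)))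
              (Complex.I • (prP y : _) + -(Complex.I • (prM y : _))) := by
            have ex : K ((prP x : _) + (prM x : _))
                = Complex.I • (prP x : _) + -(Complex.I • (prM x : _)) := by
              rw [map_add, hKp _ hpx, hKm _ hmx]
            have ey : K ((prP y : _) + (prM y : _))
                = Complex.I • (prP y : _) + -(Complex.I • (prM y : _)) := by
              rw [map_add, hKp _ hpy, hKm _ hmy]
            rw [ex, ey]
        _ = pairC V ((prP x : _) + (prM x : _)) ((prP y : _) + (prM y : _)) := by
            simp only [map_add, map_neg, map_smul, LinearMap.add_apply,
              LinearMap.neg_apply, LinearMap.smul_apply, smul_eq_mul]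
            rw [hisop _ hpx _ hpy, hisom _ hmx _ hmy]
            ring_nf
            rw [Complex.I_sq]
            ring
        _ = pairC V x y := by rw [hx, hy]
    intro u v
    have h := hpairK ((1 : ℂ) ⊗ₜ u) ((1 : ℂ) ⊗ₜ v)
    rw [hKreal, hKreal] at h
    have hbc : ∀ a b : V × Module.Dual ℝ V,
        pairC V ((1 : ℂ) ⊗ₜ a) ((1 : ℂ) ⊗ₜ b) = ((pair V a b : ℝ) : ℂ) := by
      intro a b
      rw [pairC, LinearMap.BilinForm.baseChange_tmul]
      simp [Complex.real_smul]
    rw [hbc, hbc] at h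
    exact_mod_cast h
  · intro u hu
    rw [hbase]; exact hKp u hu
  · intro u hu
    rw [hbase]; exact hKm u hu
  · -- uniqueness
    intro J' h1 h2
    have hb' : ∀ x, J'.baseChange ℂ x = K x := by
      intro x
      have hpx : ((prP x : ℂ ⊗[ℝ] _)) ∈ Ep := (prP x).2
      have hmx : ((prM x : ℂ ⊗[ℝ] _)) ∈ Em := (prM x).2
      have hx := hdecomp x
      calc J'.baseChange ℂ x = J'.baseChange ℂ ((prP x : _) + (prM x : _)) := by rw [hx]
        _ = Complex.I • (prP x : _) + -(Complex.I • (prM x : _)) := by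
            rw [map_add, h1 _ hpx, h2 _ hmx]
        _ = K ((prP x : _) + (prM x : _)) := by
            rw [map_add, hKp _ hpx, hKm _ hmx]
        _ = K x := by rw [hx]
    apply LinearMap.ext
    intro w
    apply hinj
    have hw := hb' ((1 : ℂ) ⊗ₜ w)
    rw [LinearMap.baseChange_tmul, hKreal] at hw
    exact hw
end

section
/- With J orthogonal, J² = -I, and B coisotropic (B⊥ ⊆ B) in V ⊕ V*: J(B⊥) ∩ B ⊆ B⊥ holds if and only if J(B) ⊆ B + J(B⊥). -/
open Module LinearMap

set_option maxSynthPendingDepth 3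

lemma pair_apply (V : Type) [AddCommGroup V] [Module ℝ V]
    (u v : V × Module.Dual ℝ V) : pair V u v = (u.2 v.1 + v.2 u.1) / 2 := rfl

lemma pair_isRefl (V : Type) [AddCommGroup V] [Module ℝ V] : (pair V).IsRefl := by
  intro u v h
  simpa [pair_apply, add_comm] using h

lemma pair_nondeg (V : Type) [AddCommGroup V] [Module ℝ V] [FiniteDimensional ℝ V] :
    (pair V).Nondegenerate := by
  refine (LinearMap.IsRefl.nondegenerate_iff_separatingLeft (B := pair V) (pair_isRefl V)).mpr ?_
  intro u h
  have h1 : u.2 = 0 := by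
    ext x
    have := h (x, 0)
    simp [pair_apply] at this
    simpa using this
  have h2 : u.1 = 0 := by
    rw [← Module.forall_dual_apply_eq_zero_iff ℝ]
    intro ξ
    have := h (0, ξ)
    simp [pair_apply] at this
    simpa using this
  exact Prod.ext h2 h1

/-- For `J` orthogonal with `J² = -I` and `B` coisotropic:
`J(B⊥) ∩ B ⊆ B⊥` iff `J(B) ⊆ B + J(B⊥)`. -/
theorem jborth_cap_b_iff_jb_le
    (V : Type) [AddCommGroup V] [Module ℝ V] [FiniteDimensional ℝ V]
    (J : (V × Module.Dual ℝ V) →ₗ[ℝ] (V × Module.Dual ℝ V))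
    (hJ2 : ∀ u, J (J u) = -u)
    (horth : ∀ u v, pair V (J u) (J v) = pair V u v)
    (B : Submodule ℝ (V × Module.Dual ℝ V))
    (hco : (pair V).orthogonal B ≤ B) :
    (Submodule.map J ((pair V).orthogonal B) ⊓ B ≤ (pair V).orthogonal B) ↔
    (Submodule.map J B ≤ B ⊔ Submodule.map J ((pair V).orthogonal B)) := by
  have hrefl := pair_isRefl V
  have hnd := pair_nondeg V
  have hoo : ∀ S : Submodule ℝ (V × Module.Dual ℝ V),
      (pair V).orthogonal ((pair V).orthogonal S) = S :=
    LinearMap.BilinForm.orthogonal_orthogonal hnd hrefl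
  have hJJ : ∀ S : Submodule ℝ (V × Module.Dual ℝ V),
      Submodule.map J (Submodule.map J S) = S := by
    intro S
    ext x
    simp only [Submodule.mem_map]
    constructor
    · rintro ⟨y, ⟨z, hz, rfl⟩, rfl⟩
      rw [hJ2]
      exact S.neg_mem hz
    · intro hx
      exact ⟨J (-x), ⟨-x, S.neg_mem hx, rfl⟩, by rw [hJ2]; simp⟩
  have hJinj : Function.Injective J := by
    intro a b hab
    have := congrArg J hab
    rw [hJ2, hJ2] at this
    exact neg_injective this
  -- J commutes with orthogonal
  have hmaporth : ∀ S : Submodule ℝ (V × Module.Dual ℝ V),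
      (pair V).orthogonal (Submodule.map J S) = Submodule.map J ((pair V).orthogonal S) := by
    intro S
    ext x
    simp only [LinearMap.BilinForm.mem_orthogonal_iff, Submodule.mem_map]
    constructor
    · intro hx
      refine ⟨J (-x), ?_, by rw [hJ2]; simp⟩
      intro n hn
      have h1 : pair V (J n) x = 0 := hx (J n) ⟨n, hn, rfl⟩
      have h2 : pair V (J n) (J (J (-x))) = 0 := by
        rw [hJ2]
        simpa using h1
      rw [horth] at h2
      exact h2
    · rintro ⟨y, hy, rfl⟩ n ⟨m, hm, rfl⟩
      have h1 : pair V m y = 0 := hy m hm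
      show pair V (J m) (J y) = 0
      rw [horth]
      exact h1
  -- orthogonal of sup
  have horth_sup : ∀ S T : Submodule ℝ (V × Module.Dual ℝ V),
      (pair V).orthogonal (S ⊔ T) = (pair V).orthogonal S ⊓ (pair V).orthogonal T := by
    intro S T
    apply le_antisymm
    · exact le_inf (LinearMap.BilinForm.orthogonal_le le_sup_left)
        (LinearMap.BilinForm.orthogonal_le le_sup_right)
    · intro x hx n hn
      obtain ⟨s, hs, t, ht, rfl⟩ := Submodule.mem_sup.mp hn
      have h1 : pair V s x = 0 := hx.1 s hs
      have h2 : pair V t x = 0 := hx.2 t ht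
      show pair V (s + t) x = 0
      have : pair V (s + t) x = pair V s x + pair V t x := by
        simp [map_add]
      rw [this, h1, h2, add_zero]
  -- orthogonal of inf
  have horth_inf : ∀ S T : Submodule ℝ (V × Module.Dual ℝ V),
      (pair V).orthogonal (S ⊓ T) = (pair V).orthogonal S ⊔ (pair V).orthogonal T := by
    intro S T
    conv_lhs => rw [← hoo S, ← hoo T, ← horth_sup]
    rw [hoo]
  -- both sides are equivalent to B ≤ J(B) ⊔ B⊥
  constructor
  · intro h
    have h1 : B ≤ Submodule.map J B ⊔ (pair V).orthogonal B := by
      have h2 := LinearMap.BilinForm.orthogonal_le (B := pair V) h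
      rw [hoo, horth_inf, hmaporth, hoo] at h2
      exact h2
    have h3 : Submodule.map J B ≤ Submodule.map J (Submodule.map J B ⊔ (pair V).orthogonal B) :=
      Submodule.map_mono h1
    rw [Submodule.map_sup, hJJ] at h3
    exact h3.trans (sup_le le_sup_left le_sup_right)
  · intro h
    have h1 : Submodule.map J (Submodule.map J B) ≤
        Submodule.map J (B ⊔ Submodule.map J ((pair V).orthogonal B)) := Submodule.map_mono h
    rw [hJJ, Submodule.map_sup, hJJ] at h1
    -- h1 : B ≤ J(B) ⊔ B⊥
    have h2 := LinearMap.BilinForm.orthogonal_le (B := pair V) h1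
    rw [horth_sup, hmaporth, hoo] at h2
    exact h2
end

section
/- With J orthogonal, J² = -I, and B coisotropic (B⊥ ⊆ B) in V ⊕ V*: J(B) ⊆ B + J(B⊥) if and only if B = (B ∩ JB) + B⊥. -/
open Module LinearMap

set_option maxSynthPendingDepth 3

/-! Since `J² = -1`, applying `J` turns `JB ≤ B ⊔ J(B⊥)` into `B ≤ JB ⊔ B⊥`; as `B⊥ ≤ B`, the
modular law rewrites the latter as `B = (B ⊓ JB) ⊔ B⊥`. -/

theorem sup_inf_eq_iff_le_sup {α : Type*} [Lattice α] [IsModularLattice α] {a b c : α}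
    (hcb : c ≤ b) : (b ⊓ a) ⊔ c = b ↔ b ≤ a ⊔ c := by
  rw [inf_comm, sup_comm, ← sup_inf_assoc_of_le a hcb, sup_comm, inf_eq_right]

namespace Submodule

variable {R M : Type*} [Ring R] [AddCommGroup M] [Module R M] {J : M →ₗ[R] M}

theorem map_map_eq_self_of_apply_apply_eq_neg (hJ : ∀ u, J (J u) = -u) (p : Submodule R M) :
    (p.map J).map J = p := by
  have hJJ : J ∘ₗ J = -LinearMap.id := LinearMap.ext hJ
  rw [← map_comp, hJJ, Submodule.map_neg, map_id]

theorem map_le_sup_map_of_le_map_sup (hJ : ∀ u, J (J u) = -u) {p q : Submodule R M}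
    (h : p ≤ p.map J ⊔ q) : p.map J ≤ p ⊔ q.map J := by
  simpa only [map_sup, map_map_eq_self_of_apply_apply_eq_neg hJ] using map_mono (f := J) h

theorem map_le_sup_map_iff (hJ : ∀ u, J (J u) = -u) {p q : Submodule R M} :
    p.map J ≤ p ⊔ q.map J ↔ p ≤ p.map J ⊔ q := by
  refine ⟨fun h => ?_, map_le_sup_map_of_le_map_sup hJ⟩
  have h' := map_le_sup_map_of_le_map_sup hJ (p := p.map J) (q := q.map J)
  simp only [map_map_eq_self_of_apply_apply_eq_neg hJ] at h'
  exact h' h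

end Submodule

theorem jb_le_iff_b_eq_general
    (V : Type) [AddCommGroup V] [Module ℝ V]
    (J : (V × Module.Dual ℝ V) →ₗ[ℝ] (V × Module.Dual ℝ V))
    (hJ2 : ∀ u, J (J u) = -u)
    (B : Submodule ℝ (V × Module.Dual ℝ V))
    (hco : (pair V).orthogonal B ≤ B) :
    (Submodule.map J B ≤ B ⊔ Submodule.map J ((pair V).orthogonal B)) ↔
    (B = (B ⊓ Submodule.map J B) ⊔ (pair V).orthogonal B) := by
  rw [Submodule.map_le_sup_map_iff hJ2, eq_comm, sup_inf_eq_iff_le_sup hco]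

/-- For `J` orthogonal with `J² = -I` and `B` coisotropic:
`J(B) ⊆ B + J(B⊥)` iff `B = (B ∩ JB) + B⊥`. -/
theorem jb_le_iff_b_eq
    (V : Type) [AddCommGroup V] [Module ℝ V] [FiniteDimensional ℝ V]
    (J : (V × Module.Dual ℝ V) →ₗ[ℝ] (V × Module.Dual ℝ V))
    (hJ2 : ∀ u, J (J u) = -u)
    (horth : ∀ u v, pair V (J u) (J v) = pair V u v)
    (B : Submodule ℝ (V × Module.Dual ℝ V))
    (hco : (pair V).orthogonal B ≤ B) :
    (Submodule.map J B ≤ B ⊔ Submodule.map J ((pair V).orthogonal B)) ↔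
    (B = (B ⊓ Submodule.map J B) ⊔ (pair V).orthogonal B) :=
  jb_le_iff_b_eq_general V J hJ2 B hco
end

section
/- Let J be orthogonal with J² = -I on V ⊕ V*, and B coisotropic with J(B⊥) ∩ B ⊆ B⊥. Then J(B ∩ JB) = B ∩ JB and B⊥ ∩ JB = JB⊥ ∩ B, so this subspace is J-stable; hence J induces a well-defined endomorphism J' of (B ∩ JB)/(B⊥ ∩ JB) with (J')² = -I. -/
/-!
Since `J² = -1`, `S ↦ J S` is an involution on submodules, so a submodule `D` with `J D ≤ D`
already satisfies `J D = D`. For `D = B ∩ JB` this inclusion is `J D ≤ JB ∩ B`. For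
`D = B⊥ ∩ JB` it is `J D ≤ JB⊥ ∩ B ≤ B⊥ ∩ JB`, by the hypothesis and `JB⊥ ≤ JB`; stability
then squeezes `JB⊥ ∩ B` between `J D` and `D`. Restricting `J` to `B ∩ JB` and passing to the
quotient by the stable subspace gives `J'`, and `J'² = -1` is inherited from `J`.
-/

open Module LinearMap

set_option maxSynthPendingDepth 3

namespace Submodule

variable {R M : Type*} [Ring R] [AddCommGroup M] [Module R M] {J : M →ₗ[R] M}

theorem map_map_of_sq_eq_neg (hJ2 : ∀ u, J (J u) = -u) (S : Submodule R M) :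
    (S.map J).map J = S := by
  have hJJ : J ∘ₗ J = -LinearMap.id := LinearMap.ext hJ2
  rw [← map_comp, hJJ, Submodule.map_neg, map_id]

theorem map_eq_of_map_le_of_sq_eq_neg (hJ2 : ∀ u, J (J u) = -u) {D : Submodule R M}
    (hD : D.map J ≤ D) : D.map J = D :=
  le_antisymm hD <| calc
    D = (D.map J).map J := (map_map_of_sq_eq_neg hJ2 D).symm
    _ ≤ D.map J := map_mono hD

theorem map_inf_map_self_of_sq_eq_neg (hJ2 : ∀ u, J (J u) = -u) (S : Submodule R M) :
    (S ⊓ S.map J).map J = S ⊓ S.map J := by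
  refine map_eq_of_map_le_of_sq_eq_neg hJ2 (map_inf_le J |>.trans ?_)
  rw [map_map_of_sq_eq_neg hJ2, inf_comm]

theorem inf_map_eq_map_inf_of_sq_eq_neg (hJ2 : ∀ u, J (J u) = -u) {B C : Submodule R M}
    (hCB : C ≤ B) (hred : C.map J ⊓ B ≤ C) :
    (C ⊓ B.map J).map J = C ⊓ B.map J ∧ C ⊓ B.map J = C.map J ⊓ B := by
  have hle : (C ⊓ B.map J).map J ≤ C.map J ⊓ B := by
    simpa only [map_map_of_sq_eq_neg hJ2] using map_inf_le J (p := C) (q := B.map J)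
  have hge : C.map J ⊓ B ≤ C ⊓ B.map J := le_inf hred (inf_le_left.trans (map_mono hCB))
  have hstable := map_eq_of_map_le_of_sq_eq_neg hJ2 (hle.trans hge)
  exact ⟨hstable, le_antisymm (hstable.symm.le.trans hle) hge⟩

theorem exists_quotient_map_sq_eq_neg (hJ2 : ∀ u, J (J u) = -u) {W N : Submodule R M}
    (hW : W.map J ≤ W) (hN : N.map J ≤ N) :
    ∃ J' : (W ⧸ N.comap W.subtype) →ₗ[R] (W ⧸ N.comap W.subtype),
      (∀ (x : M) (hx : x ∈ W) (hJx : J x ∈ W),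
        J' (Quotient.mk ⟨x, hx⟩) = Quotient.mk ⟨J x, hJx⟩) ∧
      ∀ q, J' (J' q) = -q := by
  let JW : W →ₗ[R] W := J.restrict fun x hx => hW (mem_map_of_mem hx)
  have hJN : N.comap W.subtype ≤ (N.comap W.subtype).comap JW :=
    fun _ hx => hN (mem_map_of_mem hx)
  refine ⟨mapQ _ _ JW hJN, fun x hx hJx => rfl, fun q => ?_⟩
  obtain ⟨⟨x, hx⟩, rfl⟩ := Quotient.mk_surjective _ q
  simp only [mapQ_apply, ← Quotient.mk_neg]
  exact congrArg Quotient.mk (Subtype.ext (hJ2 x))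

end Submodule

theorem j_descends_on_b_cap_jb_general
    (V : Type) [AddCommGroup V] [Module ℝ V]
    (J : (V × Module.Dual ℝ V) →ₗ[ℝ] (V × Module.Dual ℝ V))
    (hJ2 : ∀ u, J (J u) = -u)
    (B : Submodule ℝ (V × Module.Dual ℝ V))
    (hco : (pair V).orthogonal B ≤ B)
    (hred : Submodule.map J ((pair V).orthogonal B) ⊓ B ≤ (pair V).orthogonal B) :
    Submodule.map J (B ⊓ Submodule.map J B) = B ⊓ Submodule.map J B ∧
    (pair V).orthogonal B ⊓ Submodule.map J B =
      Submodule.map J ((pair V).orthogonal B) ⊓ B ∧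
    Submodule.map J ((pair V).orthogonal B ⊓ Submodule.map J B) =
      (pair V).orthogonal B ⊓ Submodule.map J B ∧
    ∃ J' : ((B ⊓ Submodule.map J B : Submodule ℝ (V × Module.Dual ℝ V)) ⧸
              Submodule.comap (B ⊓ Submodule.map J B).subtype
                ((pair V).orthogonal B ⊓ Submodule.map J B)) →ₗ[ℝ]
           ((B ⊓ Submodule.map J B : Submodule ℝ (V × Module.Dual ℝ V)) ⧸
              Submodule.comap (B ⊓ Submodule.map J B).subtype
                ((pair V).orthogonal B ⊓ Submodule.map J B)),
      (∀ (x : V × Module.Dual ℝ V) (hx : x ∈ B ⊓ Submodule.map J B)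
         (hJx : J x ∈ B ⊓ Submodule.map J B),
        J' (Submodule.Quotient.mk ⟨x, hx⟩) = Submodule.Quotient.mk ⟨J x, hJx⟩) ∧
      (∀ q, J' (J' q) = -q) := by
  have hW := Submodule.map_inf_map_self_of_sq_eq_neg hJ2 B
  obtain ⟨hN, hNeq⟩ := Submodule.inf_map_eq_map_inf_of_sq_eq_neg hJ2 hco hred
  exact ⟨hW, hNeq, hN, Submodule.exists_quotient_map_sq_eq_neg hJ2 hW.le hN.le⟩

/-- Let `J` be orthogonal with `J² = -I` and `B` coisotropic with
`J(B⊥) ∩ B ⊆ B⊥`.  Then `J(B ∩ JB) = B ∩ JB` and `B⊥ ∩ JB = JB⊥ ∩ B`, so this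
subspace is `J`-stable; hence `J` induces an endomorphism `J'` of
`(B ∩ JB)/(B⊥ ∩ JB)` with `(J')² = -I`. -/
theorem j_descends_on_b_cap_jb
    (V : Type) [AddCommGroup V] [Module ℝ V] [FiniteDimensional ℝ V]
    (J : (V × Module.Dual ℝ V) →ₗ[ℝ] (V × Module.Dual ℝ V))
    (hJ2 : ∀ u, J (J u) = -u)
    (horth : ∀ u v, pair V (J u) (J v) = pair V u v)
    (B : Submodule ℝ (V × Module.Dual ℝ V))
    (hco : (pair V).orthogonal B ≤ B)
    (hred : Submodule.map J ((pair V).orthogonal B) ⊓ B ≤ (pair V).orthogonal B) :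
    Submodule.map J (B ⊓ Submodule.map J B) = B ⊓ Submodule.map J B ∧
    (pair V).orthogonal B ⊓ Submodule.map J B =
      Submodule.map J ((pair V).orthogonal B) ⊓ B ∧
    Submodule.map J ((pair V).orthogonal B ⊓ Submodule.map J B) =
      (pair V).orthogonal B ⊓ Submodule.map J B ∧
    ∃ J' : ((B ⊓ Submodule.map J B : Submodule ℝ (V × Module.Dual ℝ V)) ⧸
              Submodule.comap (B ⊓ Submodule.map J B).subtype
                ((pair V).orthogonal B ⊓ Submodule.map J B)) →ₗ[ℝ]
           ((B ⊓ Submodule.map J B : Submodule ℝ (V × Module.Dual ℝ V)) ⧸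
              Submodule.comap (B ⊓ Submodule.map J B).subtype
                ((pair V).orthogonal B ⊓ Submodule.map J B)),
      (∀ (x : V × Module.Dual ℝ V) (hx : x ∈ B ⊓ Submodule.map J B)
         (hJx : J x ∈ B ⊓ Submodule.map J B),
        J' (Submodule.Quotient.mk ⟨x, hx⟩) = Submodule.Quotient.mk ⟨J x, hJx⟩) ∧
      (∀ q, J' (J' q) = -q) :=
  j_descends_on_b_cap_jb_general V J hJ2 B hco hred
end

section
/- Let J₁, J₂ be commuting orthogonal endomorphisms of (V ⊕ V*) with J₁² = J₂² = -I, and let B be coisotropic. If every element of B/B⊥ lifts to B ∩ J₁B ∩ J₂B ∩ J₁J₂B (i.e. B = (B ∩ J₁B ∩ J₂B ∩ J₁J₂B) + B⊥), then B_ℂ/B⊥_ℂ decomposes as the direct sum of the four images Φ(E^± ∩ E_±) of the joint eigenspaces, and Φ(E^± ∩ E_±) = Φ(E^±) ∩ Φ(E_±), where E^±, E_± are the ±i-eigenspaces of J₁, J₂ respectively and Φ(V') denotes the image of V' ∩ B_ℂ in B_ℂ/B⊥_ℂ. -/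
open Module LinearMap TensorProduct

set_option maxSynthPendingDepth 3

/-- The `μ`-eigenspace of the complexification of `J` in `(V ⊕ V*) ⊗ ℂ`. -/
noncomputable def eig (V : Type) [AddCommGroup V] [Module ℝ V]
    (J : (V × Module.Dual ℝ V) →ₗ[ℝ] (V × Module.Dual ℝ V)) (μ : ℂ) :
    Submodule ℂ (ℂ ⊗[ℝ] (V × Module.Dual ℝ V)) where
  carrier := {u | J.baseChange ℂ u = μ • u}
  add_mem' := by
    intro a b ha hb
    simp only [Set.mem_setOf_eq, map_add] at *
    rw [ha, hb, smul_add]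
  zero_mem' := by simp
  smul_mem' := by
    intro c u hu
    simp only [Set.mem_setOf_eq, map_smul] at *
    rw [hu, smul_comm]

/-- `Φ(S)`: the image of `S ∩ B_ℂ` in the quotient `B_ℂ/B⊥_ℂ`
(realized inside the quotient of `(V ⊕ V*) ⊗ ℂ` by `B⊥_ℂ`). -/
noncomputable def Phi (V : Type) [AddCommGroup V] [Module ℝ V]
    (B : Submodule ℝ (V × Module.Dual ℝ V))
    (S : Submodule ℂ (ℂ ⊗[ℝ] (V × Module.Dual ℝ V))) :
    Submodule ℂ ((ℂ ⊗[ℝ] (V × Module.Dual ℝ V)) ⧸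
      (((pair V).orthogonal B).baseChange ℂ)) :=
  Submodule.map ((((pair V).orthogonal B).baseChange ℂ)).mkQ (S ⊓ B.baseChange ℂ)

namespace GKAux
variable {M : Type*} [AddCommGroup M] [Module ℝ M]

/-- real part projection of `ℂ ⊗[ℝ] M` -/
noncomputable def Lre : ℂ ⊗[ℝ] M →ₗ[ℝ] M :=
  TensorProduct.lift ((LinearMap.lsmul ℝ M).comp Complex.reLm)

noncomputable def Lim : ℂ ⊗[ℝ] M →ₗ[ℝ] M :=
  TensorProduct.lift ((LinearMap.lsmul ℝ M).comp Complex.imLm)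

@[simp] lemma Lre_tmul (c : ℂ) (m : M) : Lre (c ⊗ₜ[ℝ] m) = c.re • m := rfl
@[simp] lemma Lim_tmul (c : ℂ) (m : M) : Lim (c ⊗ₜ[ℝ] m) = c.im • m := rfl

lemma decomp (x : ℂ ⊗[ℝ] M) :
    (1 : ℂ) ⊗ₜ[ℝ] Lre x + Complex.I ⊗ₜ[ℝ] Lim x = x := by
  induction x using TensorProduct.induction_on with
  | zero => simp
  | tmul c m =>
      simp only [Lre_tmul, Lim_tmul, tmul_smul]
      rw [smul_tmul', smul_tmul', ← add_tmul]
      congr 1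
      simp [Complex.real_smul, Complex.re_add_im]
  | add a b ha hb =>
      simp only [map_add, tmul_add] at *
      rw [add_add_add_comm, ha, hb]

lemma Lre_smul (c : ℂ) (x : ℂ ⊗[ℝ] M) :
    Lre (c • x) = c.re • Lre x - c.im • Lim x := by
  induction x using TensorProduct.induction_on with
  | zero => simp
  | tmul d m =>
      simp only [smul_tmul', smul_eq_mul, Lre_tmul, Lim_tmul, smul_smul, ← sub_smul,
        Complex.mul_re]
  | add a b ha hb => simp only [smul_add, map_add, ha, hb]; abel

lemma Lim_smul (c : ℂ) (x : ℂ ⊗[ℝ] M) :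
    Lim (c • x) = c.re • Lim x + c.im • Lre x := by
  induction x using TensorProduct.induction_on with
  | zero => simp
  | tmul d m =>
      simp only [smul_tmul', smul_eq_mul, Lre_tmul, Lim_tmul, smul_smul, ← add_smul,
        Complex.mul_im]
  | add a b ha hb => simp only [smul_add, map_add, ha, hb]; abel

lemma mem_baseChange_iff {p : Submodule ℝ M} {x : ℂ ⊗[ℝ] M} :
    x ∈ p.baseChange ℂ ↔ Lre x ∈ p ∧ Lim x ∈ p := by
  constructor
  · intro hx
    rw [Submodule.baseChange_eq_span] at hx
    refine Submodule.span_induction ?_ ?_ ?_ ?_ hx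
    · rintro y ⟨m, hm, rfl⟩
      refine ⟨by simpa using hm, by simp⟩
    · simp
    · intro a b _ _ ha hb
      simp only [map_add]
      exact ⟨p.add_mem ha.1 hb.1, p.add_mem ha.2 hb.2⟩
    · intro c y _ hy
      rw [Lre_smul, Lim_smul]
      exact ⟨p.sub_mem (p.smul_mem _ hy.1) (p.smul_mem _ hy.2),
        p.add_mem (p.smul_mem _ hy.2) (p.smul_mem _ hy.1)⟩
  · rintro ⟨h1, h2⟩
    rw [← decomp x]
    exact Submodule.add_mem _ (Submodule.tmul_mem_baseChange_of_mem _ h1)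
      (Submodule.tmul_mem_baseChange_of_mem _ h2)

lemma Lre_baseChange (J : M →ₗ[ℝ] M) (x : ℂ ⊗[ℝ] M) :
    Lre (J.baseChange ℂ x) = J (Lre x) := by
  induction x using TensorProduct.induction_on with
  | zero => simp
  | tmul c m => simp
  | add a b ha hb => simp [ha, hb]

lemma Lim_baseChange (J : M →ₗ[ℝ] M) (x : ℂ ⊗[ℝ] M) :
    Lim (J.baseChange ℂ x) = J (Lim x) := by
  induction x using TensorProduct.induction_on with
  | zero => simp
  | tmul c m => simp
  | add a b ha hb => simp [ha, hb]

end GKAux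

namespace GKAux
open Complex
variable {M : Type*} [AddCommGroup M] [Module ℝ M] (Φ : LinearMap.BilinForm ℝ M)

noncomputable abbrev ΦC : LinearMap.BilinForm ℂ (ℂ ⊗[ℝ] M) := Φ.baseChange ℂ

lemma pairC_orthJ (J : M →ₗ[ℝ] M) (horth : ∀ u v, Φ (J u) (J v) = Φ u v)
    (x y : ℂ ⊗[ℝ] M) : ΦC Φ (J.baseChange ℂ x) (J.baseChange ℂ y) = ΦC Φ x y := by
  induction x using TensorProduct.induction_on with
  | zero => simp
  | add a b ha hb => simp [map_add, ha, hb]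
  | tmul c m =>
      induction y using TensorProduct.induction_on with
      | zero => simp
      | add a b ha hb => simp only [map_add, ha, hb]
      | tmul d n =>
          simp [LinearMap.baseChange_tmul, LinearMap.BilinForm.baseChange_tmul, horth]

lemma pairC_zero_of {p q : Submodule ℝ M} (h : ∀ u ∈ p, ∀ v ∈ q, Φ u v = 0)
    {x y : ℂ ⊗[ℝ] M} (hx : x ∈ p.baseChange ℂ) (hy : y ∈ q.baseChange ℂ) :
    ΦC Φ x y = 0 := by
  rw [mem_baseChange_iff] at hx hy
  rw [← decomp x, ← decomp y]
  simp [LinearMap.BilinForm.baseChange_tmul, h _ hx.1 _ hy.1, h _ hx.1 _ hy.2,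
    h _ hx.2 _ hy.1, h _ hx.2 _ hy.2]

lemma pairC_one_tmul_re (x : ℂ ⊗[ℝ] M) (m : M) :
    (ΦC Φ x ((1:ℂ) ⊗ₜ[ℝ] m)).re = Φ (Lre x) m := by
  induction x using TensorProduct.induction_on with
  | zero => simp
  | add a b ha hb => simp [map_add, ha, hb]
  | tmul c u => simp [LinearMap.BilinForm.baseChange_tmul, Complex.real_smul]; ring

lemma pairC_one_tmul_im (x : ℂ ⊗[ℝ] M) (m : M) :
    (ΦC Φ x ((1:ℂ) ⊗ₜ[ℝ] m)).im = Φ (Lim x) m := by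
  induction x using TensorProduct.induction_on with
  | zero => simp
  | add a b ha hb => simp [map_add, ha, hb]
  | tmul c u => simp [LinearMap.BilinForm.baseChange_tmul, Complex.real_smul]; ring

lemma eig_orth {J : M →ₗ[ℝ] M} (horth : ∀ u v, Φ (J u) (J v) = Φ u v)
    {x y : ℂ ⊗[ℝ] M} {s s' : ℂ} (hss' : s * s' ≠ 1)
    (hx : J.baseChange ℂ x = s • x) (hy : J.baseChange ℂ y = s' • y) :
    ΦC Φ x y = 0 := by
  have h := pairC_orthJ Φ J horth x y
  rw [hx, hy] at h
  simp only [map_smul, LinearMap.smul_apply, smul_eq_mul] at h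
  have : (s * s' - 1) * ΦC Φ x y = 0 := by linear_combination h
  rcases mul_eq_zero.mp this with h' | h'
  · exact absurd (by linear_combination h') hss'
  · exact h'

end GKAux

namespace GKAux
variable {M : Type*} [AddCommGroup M] [Module ℝ M]

lemma baseChange_sq {J : M →ₗ[ℝ] M} (hsq : ∀ u, J (J u) = -u) (x : ℂ ⊗[ℝ] M) :
    J.baseChange ℂ (J.baseChange ℂ x) = -x := by
  induction x using TensorProduct.induction_on with
  | zero => simp
  | tmul c m => simp [hsq, tmul_neg]
  | add a b ha hb => simp [ha, hb]; abel

lemma baseChange_comm {J₁ J₂ : M →ₗ[ℝ] M} (hcomm : ∀ u, J₁ (J₂ u) = J₂ (J₁ u))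
    (x : ℂ ⊗[ℝ] M) :
    J₁.baseChange ℂ (J₂.baseChange ℂ x) = J₂.baseChange ℂ (J₁.baseChange ℂ x) := by
  induction x using TensorProduct.induction_on with
  | zero => simp
  | tmul c m => simp [hcomm]
  | add a b ha hb => simp [ha, hb]

/-- Spectral projection to the `s`-eigenspace of `J`. -/
noncomputable def proj (J : M →ₗ[ℝ] M) (s : ℂ) (x : ℂ ⊗[ℝ] M) : ℂ ⊗[ℝ] M :=
  (2:ℂ)⁻¹ • (x - s • J.baseChange ℂ x)

lemma proj_sum (J : M →ₗ[ℝ] M) (s : ℂ) (x : ℂ ⊗[ℝ] M) :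
    proj J s x + proj J (-s) x = x := by
  unfold proj
  match_scalars <;> ring

lemma proj_mem {J : M →ₗ[ℝ] M} {s : ℂ} {S : Submodule ℂ (ℂ ⊗[ℝ] M)} {x : ℂ ⊗[ℝ] M}
    (hx : x ∈ S) (hJx : J.baseChange ℂ x ∈ S) : proj J s x ∈ S :=
  S.smul_mem _ (S.sub_mem hx (S.smul_mem _ hJx))

lemma proj_eig {J : M →ₗ[ℝ] M} (hsq : ∀ u, J (J u) = -u) {s : ℂ} (hs : s * s = -1)
    (x : ℂ ⊗[ℝ] M) : J.baseChange ℂ (proj J s x) = s • proj J s x := by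
  unfold proj
  rw [map_smul, map_sub, map_smul, baseChange_sq hsq]
  match_scalars
  all_goals first
    | ring1
    | linear_combination (2:ℂ)⁻¹ * hs
    | linear_combination (-(2:ℂ)⁻¹) * hs
    | linear_combination ((2:ℂ)⁻¹ * s) * hs
    | linear_combination (-((2:ℂ)⁻¹ * s)) * hs

lemma proj_self {J : M →ₗ[ℝ] M} {s : ℂ} (hs : s * s = -1) {x : ℂ ⊗[ℝ] M}
    (hx : J.baseChange ℂ x = s • x) : proj J s x = x := by
  unfold proj
  rw [hx]
  match_scalars
  all_goals first
    | ring1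
    | linear_combination (2:ℂ)⁻¹ * hs
    | linear_combination (-(2:ℂ)⁻¹) * hs
    | linear_combination ((2:ℂ)⁻¹ * s) * hs
    | linear_combination (-((2:ℂ)⁻¹ * s)) * hs

lemma proj_other {J : M →ₗ[ℝ] M} {s : ℂ} (hs : s * s = -1) {x : ℂ ⊗[ℝ] M}
    (hx : J.baseChange ℂ x = -s • x) : proj J s x = 0 := by
  unfold proj
  rw [hx]
  match_scalars
  all_goals first
    | ring1
    | linear_combination (2:ℂ)⁻¹ * hs
    | linear_combination (-(2:ℂ)⁻¹) * hs
    | linear_combination ((2:ℂ)⁻¹ * s) * hs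
    | linear_combination (-((2:ℂ)⁻¹ * s)) * hs

lemma proj_comm {J₁ J₂ : M →ₗ[ℝ] M} (hcomm : ∀ u, J₁ (J₂ u) = J₂ (J₁ u)) (s : ℂ)
    (x : ℂ ⊗[ℝ] M) :
    J₂.baseChange ℂ (proj J₁ s x) = proj J₁ s (J₂.baseChange ℂ x) := by
  unfold proj
  rw [map_smul, map_sub, map_smul, baseChange_comm hcomm]

end GKAux

namespace GKAux
variable {M : Type*} [AddCommGroup M] [Module ℝ M] {Φ : LinearMap.BilinForm ℝ M}
  {J₁ J₂ : M →ₗ[ℝ] M} {B C : Submodule ℝ M}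

lemma baseChange_mono {p q : Submodule ℝ M} (h : p ≤ q) :
    p.baseChange ℂ ≤ q.baseChange ℂ := by
  intro x hx
  rw [mem_baseChange_iff] at hx ⊢
  exact ⟨h hx.1, h hx.2⟩

lemma proj_smul (J : M →ₗ[ℝ] M) (s c : ℂ) (x : ℂ ⊗[ℝ] M) :
    proj J s (c • x) = c • proj J s x := by
  unfold proj
  rw [map_smul]
  match_scalars <;> ring1

lemma ne_one_of_eq_neg_one {a : ℂ} (h : a = -1) : a ≠ 1 := fun hh => by
  rw [hh] at h; exact (by norm_num : ¬ ((1:ℂ) = -1)) h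

lemma mem_orthC (hsymm : ∀ u v, Φ u v = Φ v u)
    (hBle : B ≤ C ⊔ Φ.orthogonal B)
    {x : ℂ ⊗[ℝ] M} (hxB : x ∈ B.baseChange ℂ)
    (hxperp : ∀ z ∈ C.baseChange ℂ, ΦC Φ x z = 0) :
    x ∈ (Φ.orthogonal B).baseChange ℂ := by
  obtain ⟨hx1, hx2⟩ := mem_baseChange_iff.mp hxB
  have key : ∀ m ∈ B, Φ (Lre x) m = 0 ∧ Φ (Lim x) m = 0 := by
    intro m hm
    obtain ⟨c, hc, w, hw, rfl⟩ := Submodule.mem_sup.mp (hBle hm)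
    have hc0 := hxperp _ (Submodule.tmul_mem_baseChange_of_mem 1 hc)
    have hre : Φ (Lre x) c = 0 := by
      simpa [pairC_one_tmul_re] using congrArg Complex.re hc0
    have him : Φ (Lim x) c = 0 := by
      simpa [pairC_one_tmul_im] using congrArg Complex.im hc0
    rw [LinearMap.BilinForm.mem_orthogonal_iff] at hw
    constructor
    · rw [map_add, hre, zero_add]; exact hw _ hx1
    · rw [map_add, him, zero_add]; exact hw _ hx2
  rw [mem_baseChange_iff]
  constructor <;> rw [LinearMap.BilinForm.mem_orthogonal_iff] <;> intro n hn
  · show Φ n (Lre x) = 0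
    rw [hsymm]; exact (key n hn).1
  · show Φ n (Lim x) = 0
    rw [hsymm]; exact (key n hn).2

lemma mem_orthC_of_eig (hsymm : ∀ u v, Φ u v = Φ v u)
    (hBle : B ≤ C ⊔ Φ.orthogonal B)
    (hJ1sq : ∀ u, J₁ (J₁ u) = -u) (hJ2sq : ∀ u, J₂ (J₂ u) = -u)
    (horth1 : ∀ u v, Φ (J₁ u) (J₁ v) = Φ u v)
    (horth2 : ∀ u v, Φ (J₂ u) (J₂ v) = Φ u v)
    (hcomm : ∀ u, J₁ (J₂ u) = J₂ (J₁ u))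
    (hC1 : ∀ z ∈ C.baseChange ℂ, J₁.baseChange ℂ z ∈ C.baseChange ℂ)
    (hC2 : ∀ z ∈ C.baseChange ℂ, J₂.baseChange ℂ z ∈ C.baseChange ℂ)
    {x : ℂ ⊗[ℝ] M} {s₁ t₁ : ℂ} (hxB : x ∈ B.baseChange ℂ)
    (hs₁ : s₁ * s₁ = -1) (ht₁ : t₁ * t₁ = -1)
    (hx1 : J₁.baseChange ℂ x = s₁ • x) (hx2 : J₂.baseChange ℂ x = t₁ • x)
    (hz : ∀ z ∈ C.baseChange ℂ, J₁.baseChange ℂ z = -s₁ • z →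
      J₂.baseChange ℂ z = -t₁ • z → ΦC Φ x z = 0) :
    x ∈ (Φ.orthogonal B).baseChange ℂ := by
  refine mem_orthC hsymm hBle hxB ?_
  intro z hzC
  have hcomp : ∀ s t : ℂ, s * s = -1 → t * t = -1 →
      ΦC Φ x (proj J₁ s (proj J₂ t z)) = 0 := by
    intro s t hs ht
    have hm2 : proj J₂ t z ∈ C.baseChange ℂ := proj_mem hzC (hC2 _ hzC)
    have hmst : proj J₁ s (proj J₂ t z) ∈ C.baseChange ℂ := proj_mem hm2 (hC1 _ hm2)
    have he1 : J₁.baseChange ℂ (proj J₁ s (proj J₂ t z)) =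
        s • proj J₁ s (proj J₂ t z) := proj_eig hJ1sq hs _
    have he2 : J₂.baseChange ℂ (proj J₁ s (proj J₂ t z)) =
        t • proj J₁ s (proj J₂ t z) := by
      rw [proj_comm hcomm, proj_eig hJ2sq ht, proj_smul]
    by_cases hcs : s₁ * s = 1
    · by_cases hct : t₁ * t = 1
      · have hseq : s = -s₁ := by linear_combination (-s₁) * hcs + s * hs₁
        have hteq : t = -t₁ := by linear_combination (-t₁) * hct + t * ht₁
        refine hz _ hmst ?_ ?_
        · rw [he1, hseq]
        · rw [he2, hteq]
      · exact eig_orth Φ horth2 hct hx2 he2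
    · exact eig_orth Φ horth1 hcs hx1 he1
  have hzdec : (proj J₁ s₁ (proj J₂ t₁ z) + proj J₁ (-s₁) (proj J₂ t₁ z)) +
      (proj J₁ s₁ (proj J₂ (-t₁) z) + proj J₁ (-s₁) (proj J₂ (-t₁) z)) = z := by
    rw [proj_sum, proj_sum, proj_sum]
  have hns : -s₁ * -s₁ = -1 := by linear_combination hs₁
  have hnt : -t₁ * -t₁ = -1 := by linear_combination ht₁
  conv_lhs => rw [← hzdec]
  simp only [map_add]
  rw [hcomp s₁ t₁ hs₁ ht₁, hcomp (-s₁) t₁ hns ht₁, hcomp s₁ (-t₁) hs₁ hnt,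
    hcomp (-s₁) (-t₁) hns hnt]
  simp

lemma orth_pair_zero (hsymm : ∀ u v, Φ u v = Φ v u) :
    ∀ u ∈ Φ.orthogonal B, ∀ v ∈ B, Φ u v = 0 := by
  intro u hu v hv
  rw [hsymm]
  exact (LinearMap.BilinForm.mem_orthogonal_iff.mp hu) v hv

lemma indep_aux (hsymm : ∀ u v, Φ u v = Φ v u)
    (hBle : B ≤ C ⊔ Φ.orthogonal B) (hCB : C ≤ B)
    (hJ1sq : ∀ u, J₁ (J₁ u) = -u) (hJ2sq : ∀ u, J₂ (J₂ u) = -u)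
    (horth1 : ∀ u v, Φ (J₁ u) (J₁ v) = Φ u v)
    (horth2 : ∀ u v, Φ (J₂ u) (J₂ v) = Φ u v)
    (hcomm : ∀ u, J₁ (J₂ u) = J₂ (J₁ u))
    (hC1 : ∀ z ∈ C.baseChange ℂ, J₁.baseChange ℂ z ∈ C.baseChange ℂ)
    (hC2 : ∀ z ∈ C.baseChange ℂ, J₂.baseChange ℂ z ∈ C.baseChange ℂ)
    {x a b c : ℂ ⊗[ℝ] M} {s t sa ta sb tb sc tc : ℂ}
    (hs : s * s = -1) (ht : t * t = -1)
    (hxB : x ∈ B.baseChange ℂ)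
    (hx1 : J₁.baseChange ℂ x = s • x) (hx2 : J₂.baseChange ℂ x = t • x)
    (ha1 : J₁.baseChange ℂ a = sa • a) (ha2 : J₂.baseChange ℂ a = ta • a)
    (hb1 : J₁.baseChange ℂ b = sb • b) (hb2 : J₂.baseChange ℂ b = tb • b)
    (hc1 : J₁.baseChange ℂ c = sc • c) (hc2 : J₂.baseChange ℂ c = tc • c)
    (hva : sa * -s ≠ 1 ∨ ta * -t ≠ 1)
    (hvb : sb * -s ≠ 1 ∨ tb * -t ≠ 1)
    (hvc : sc * -s ≠ 1 ∨ tc * -t ≠ 1)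
    (hsub : x - a - b - c ∈ (Φ.orthogonal B).baseChange ℂ) :
    x ∈ (Φ.orthogonal B).baseChange ℂ := by
  refine mem_orthC_of_eig hsymm hBle hJ1sq hJ2sq horth1 horth2 hcomm hC1 hC2
    hxB hs ht hx1 hx2 ?_
  intro z hzC hz1 hz2
  have hzB : z ∈ B.baseChange ℂ := baseChange_mono hCB hzC
  have hW : ΦC Φ (x - a - b - c) z = 0 :=
    pairC_zero_of Φ (orth_pair_zero hsymm) hsub hzB
  have hA : ΦC Φ a z = 0 := by
    rcases hva with h | h
    · exact eig_orth Φ horth1 h ha1 hz1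
    · exact eig_orth Φ horth2 h ha2 hz2
  have hB : ΦC Φ b z = 0 := by
    rcases hvb with h | h
    · exact eig_orth Φ horth1 h hb1 hz1
    · exact eig_orth Φ horth2 h hb2 hz2
  have hC : ΦC Φ c z = 0 := by
    rcases hvc with h | h
    · exact eig_orth Φ horth1 h hc1 hz1
    · exact eig_orth Φ horth2 h hc2 hz2
  have hexp : ΦC Φ (x - a - b - c) z =
      ΦC Φ x z - ΦC Φ a z - ΦC Φ b z - ΦC Φ c z := by
    simp [map_sub]
  linear_combination hW + hA + hB + hC - hexp

end GKAux

open GKAux in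
lemma mem_eig {V : Type} [AddCommGroup V] [Module ℝ V]
    {J : (V × Module.Dual ℝ V) →ₗ[ℝ] (V × Module.Dual ℝ V)} {μ : ℂ}
    {x : ℂ ⊗[ℝ] (V × Module.Dual ℝ V)} :
    x ∈ eig V J μ ↔ J.baseChange ℂ x = μ • x := Iff.rfl

lemma mem_Phi {V : Type} [AddCommGroup V] [Module ℝ V]
    {B : Submodule ℝ (V × Module.Dual ℝ V)}
    {S : Submodule ℂ (ℂ ⊗[ℝ] (V × Module.Dual ℝ V))}
    {q : (ℂ ⊗[ℝ] (V × Module.Dual ℝ V)) ⧸ (((pair V).orthogonal B).baseChange ℂ)} :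
    q ∈ Phi V B S ↔ ∃ y ∈ S ⊓ B.baseChange ℂ,
      (((pair V).orthogonal B).baseChange ℂ).mkQ y = q := by
  unfold Phi
  exact Submodule.mem_map

lemma Phi_eq {V : Type} [AddCommGroup V] [Module ℝ V]
    (B : Submodule ℝ (V × Module.Dual ℝ V))
    (S : Submodule ℂ (ℂ ⊗[ℝ] (V × Module.Dual ℝ V))) :
    Phi V B S = Submodule.map ((((pair V).orthogonal B).baseChange ℂ)).mkQ
      (S ⊓ B.baseChange ℂ) := rfl

set_option maxHeartbeats 2000000

/-- Let `J₁, J₂` be commuting linear generalized complex structures and `B`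
coisotropic.  If `B = (B ∩ J₁B ∩ J₂B ∩ J₁J₂B) + B⊥`, then `B_ℂ/B⊥_ℂ` is the
direct sum of the four images `Φ(E^± ∩ E_±)` of the joint eigenspaces, and
`Φ(E^± ∩ E_±) = Φ(E^±) ∩ Φ(E_±)`. -/
theorem generalized_kaehler_reduction_linear
    (V : Type) [AddCommGroup V] [Module ℝ V] [FiniteDimensional ℝ V]
    (J₁ J₂ : (V × Module.Dual ℝ V) →ₗ[ℝ] (V × Module.Dual ℝ V))
    (hJ1sq : ∀ u, J₁ (J₁ u) = -u) (hJ2sq : ∀ u, J₂ (J₂ u) = -u)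
    (horth1 : ∀ u v, pair V (J₁ u) (J₁ v) = pair V u v)
    (horth2 : ∀ u v, pair V (J₂ u) (J₂ v) = pair V u v)
    (hcomm : ∀ u, J₁ (J₂ u) = J₂ (J₁ u))
    (B : Submodule ℝ (V × Module.Dual ℝ V))
    (hco : (pair V).orthogonal B ≤ B)
    (hlift : B = (B ⊓ Submodule.map J₁ B ⊓ Submodule.map J₂ B ⊓
        Submodule.map (J₁ ∘ₗ J₂) B) ⊔ (pair V).orthogonal B) :
    (Phi V B (eig V J₁ Complex.I ⊓ eig V J₂ Complex.I) ⊔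
     Phi V B (eig V J₁ Complex.I ⊓ eig V J₂ (-Complex.I)) ⊔
     Phi V B (eig V J₁ (-Complex.I) ⊓ eig V J₂ Complex.I) ⊔
     Phi V B (eig V J₁ (-Complex.I) ⊓ eig V J₂ (-Complex.I)) =
       Submodule.map ((((pair V).orthogonal B).baseChange ℂ)).mkQ
         (B.baseChange ℂ)) ∧
    (Phi V B (eig V J₁ Complex.I ⊓ eig V J₂ Complex.I) ⊓
      (Phi V B (eig V J₁ Complex.I ⊓ eig V J₂ (-Complex.I)) ⊔
       Phi V B (eig V J₁ (-Complex.I) ⊓ eig V J₂ Complex.I) ⊔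
       Phi V B (eig V J₁ (-Complex.I) ⊓ eig V J₂ (-Complex.I))) = ⊥) ∧
    (Phi V B (eig V J₁ Complex.I ⊓ eig V J₂ (-Complex.I)) ⊓
      (Phi V B (eig V J₁ Complex.I ⊓ eig V J₂ Complex.I) ⊔
       Phi V B (eig V J₁ (-Complex.I) ⊓ eig V J₂ Complex.I) ⊔
       Phi V B (eig V J₁ (-Complex.I) ⊓ eig V J₂ (-Complex.I))) = ⊥) ∧
    (Phi V B (eig V J₁ (-Complex.I) ⊓ eig V J₂ Complex.I) ⊓
      (Phi V B (eig V J₁ Complex.I ⊓ eig V J₂ Complex.I) ⊔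
       Phi V B (eig V J₁ Complex.I ⊓ eig V J₂ (-Complex.I)) ⊔
       Phi V B (eig V J₁ (-Complex.I) ⊓ eig V J₂ (-Complex.I))) = ⊥) ∧
    (Phi V B (eig V J₁ (-Complex.I) ⊓ eig V J₂ (-Complex.I)) ⊓
      (Phi V B (eig V J₁ Complex.I ⊓ eig V J₂ Complex.I) ⊔
       Phi V B (eig V J₁ Complex.I ⊓ eig V J₂ (-Complex.I)) ⊔
       Phi V B (eig V J₁ (-Complex.I) ⊓ eig V J₂ Complex.I)) = ⊥) ∧
    (∀ s t : ℂ, (s = Complex.I ∨ s = -Complex.I) →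
      (t = Complex.I ∨ t = -Complex.I) →
      Phi V B (eig V J₁ s ⊓ eig V J₂ t) =
        Phi V B (eig V J₁ s) ⊓ Phi V B (eig V J₂ t)) := by
  classical
  have hsymm : ∀ u v, pair V u v = pair V v u := by
    intro u v
    simp only [pair, LinearMap.mk₂_apply]
    ring
  set C : Submodule ℝ (V × Module.Dual ℝ V) :=
    B ⊓ Submodule.map J₁ B ⊓ Submodule.map J₂ B ⊓ Submodule.map (J₁ ∘ₗ J₂) B with hCdef
  have hBle : B ≤ C ⊔ (pair V).orthogonal B := le_of_eq hlift
  have hCB : C ≤ B := fun u hu => hu.1.1.1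
  have hC1r : ∀ u ∈ C, J₁ u ∈ C := by
    rintro u ⟨⟨⟨huB, hu1⟩, hu2⟩, hu12⟩
    obtain ⟨b1, hb1, hub1⟩ := hu1
    obtain ⟨b2, hb2, hub2⟩ := hu2
    obtain ⟨b3, hb3, hub3⟩ := hu12
    refine ⟨⟨⟨?_, ⟨u, huB, rfl⟩⟩, ?_⟩, ?_⟩
    · have h : J₁ u = -b1 := by rw [← hub1, hJ1sq]
      rw [h]; exact B.neg_mem hb1
    · refine ⟨-b3, B.neg_mem hb3, ?_⟩
      rw [← hub3]
      simp [LinearMap.comp_apply, hJ1sq]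
    · exact ⟨b2, hb2, by simp [LinearMap.comp_apply, hub2]⟩
  have hC2r : ∀ u ∈ C, J₂ u ∈ C := by
    rintro u ⟨⟨⟨huB, hu1⟩, hu2⟩, hu12⟩
    obtain ⟨b1, hb1, hub1⟩ := hu1
    obtain ⟨b2, hb2, hub2⟩ := hu2
    obtain ⟨b3, hb3, hub3⟩ := hu12
    refine ⟨⟨⟨?_, ?_⟩, ⟨u, huB, rfl⟩⟩, ?_⟩
    · have h : J₂ u = -b2 := by rw [← hub2, hJ2sq]
      rw [h]; exact B.neg_mem hb2
    · refine ⟨-b3, B.neg_mem hb3, ?_⟩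
      rw [← hub3]
      simp only [map_neg, LinearMap.comp_apply]
      rw [← hcomm, hJ2sq]
      exact (map_neg J₁ b3).symm
    · exact ⟨b1, hb1, by simp [LinearMap.comp_apply, hub1, hcomm]⟩
  have hCc1 : ∀ z ∈ C.baseChange ℂ, J₁.baseChange ℂ z ∈ C.baseChange ℂ := by
    intro z hz
    rw [GKAux.mem_baseChange_iff] at hz ⊢
    exact ⟨by rw [GKAux.Lre_baseChange]; exact hC1r _ hz.1,
      by rw [GKAux.Lim_baseChange]; exact hC1r _ hz.2⟩
  have hCc2 : ∀ z ∈ C.baseChange ℂ, J₂.baseChange ℂ z ∈ C.baseChange ℂ := by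
    intro z hz
    rw [GKAux.mem_baseChange_iff] at hz ⊢
    exact ⟨by rw [GKAux.Lre_baseChange]; exact hC2r _ hz.1,
      by rw [GKAux.Lim_baseChange]; exact hC2r _ hz.2⟩
  have hBcle : B.baseChange ℂ ≤ C.baseChange ℂ ⊔ ((pair V).orthogonal B).baseChange ℂ := by
    intro x hx
    rw [GKAux.mem_baseChange_iff] at hx
    obtain ⟨c1, hc1, w1, hw1, he1⟩ := Submodule.mem_sup.mp (hBle hx.1)
    obtain ⟨c2, hc2, w2, hw2, he2⟩ := Submodule.mem_sup.mp (hBle hx.2)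
    refine Submodule.mem_sup.mpr ⟨(1:ℂ) ⊗ₜ[ℝ] c1 + Complex.I ⊗ₜ[ℝ] c2, ?_,
      (1:ℂ) ⊗ₜ[ℝ] w1 + Complex.I ⊗ₜ[ℝ] w2, ?_, ?_⟩
    · exact add_mem (Submodule.tmul_mem_baseChange_of_mem _ hc1)
        (Submodule.tmul_mem_baseChange_of_mem _ hc2)
    · exact add_mem (Submodule.tmul_mem_baseChange_of_mem _ hw1)
        (Submodule.tmul_mem_baseChange_of_mem _ hw2)
    · conv_rhs => rw [← GKAux.decomp x]
      rw [← he1, ← he2, tmul_add, tmul_add]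
      abel
  have hI : Complex.I * Complex.I = -1 := Complex.I_mul_I
  have hmI : -Complex.I * -Complex.I = -1 := by linear_combination hI
  have hπ0 : ∀ u ∈ ((pair V).orthogonal B).baseChange ℂ,
      ((((pair V).orthogonal B).baseChange ℂ)).mkQ u = 0 := fun u hu =>
    (Submodule.Quotient.mk_eq_zero _).mpr hu
  have hcompeig1 : ∀ (s t : ℂ), s * s = -1 → ∀ z : ℂ ⊗[ℝ] (V × Module.Dual ℝ V),
      J₁.baseChange ℂ (GKAux.proj J₁ s (GKAux.proj J₂ t z)) =
        s • GKAux.proj J₁ s (GKAux.proj J₂ t z) := fun s t hs z =>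
    GKAux.proj_eig hJ1sq hs _
  have hcompeig2 : ∀ (s t : ℂ), t * t = -1 → ∀ z : ℂ ⊗[ℝ] (V × Module.Dual ℝ V),
      J₂.baseChange ℂ (GKAux.proj J₁ s (GKAux.proj J₂ t z)) =
        t • GKAux.proj J₁ s (GKAux.proj J₂ t z) := by
    intro s t ht z
    rw [GKAux.proj_comm hcomm, GKAux.proj_eig hJ2sq ht, GKAux.proj_smul]
  have hcompmem : ∀ (s t : ℂ) (z : ℂ ⊗[ℝ] (V × Module.Dual ℝ V)), z ∈ C.baseChange ℂ →
      GKAux.proj J₁ s (GKAux.proj J₂ t z) ∈ C.baseChange ℂ := by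
    intro s t z hz
    have h2 : GKAux.proj J₂ t z ∈ C.baseChange ℂ := GKAux.proj_mem hz (hCc2 _ hz)
    exact GKAux.proj_mem h2 (hCc1 _ h2)

  have hbot : ∀ s t sa ta sb tb sc tc : ℂ, s*s = -1 → t*t = -1 →
      (sa * -s ≠ 1 ∨ ta * -t ≠ 1) → (sb * -s ≠ 1 ∨ tb * -t ≠ 1) →
      (sc * -s ≠ 1 ∨ tc * -t ≠ 1) →
      Phi V B (eig V J₁ s ⊓ eig V J₂ t) ⊓
        (Phi V B (eig V J₁ sa ⊓ eig V J₂ ta) ⊔ Phi V B (eig V J₁ sb ⊓ eig V J₂ tb) ⊔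
         Phi V B (eig V J₁ sc ⊓ eig V J₂ tc)) = ⊥ := by
    intro s t sa ta sb tb sc tc hs ht hva hvb hvc
    rw [eq_bot_iff]
    intro q hq
    rw [Submodule.mem_inf] at hq
    obtain ⟨hq1, hq2⟩ := hq
    rw [mem_Phi] at hq1
    obtain ⟨x, ⟨⟨hx1, hx2⟩, hxB⟩, rfl⟩ := hq1
    obtain ⟨q', hq', qc, hqc, hsum⟩ := Submodule.mem_sup.mp hq2
    obtain ⟨qa, hqa, qb, hqb, rfl⟩ := Submodule.mem_sup.mp hq'
    rw [mem_Phi] at hqa hqb hqc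
    obtain ⟨a, ⟨⟨ha1, ha2⟩, haB⟩, rfl⟩ := hqa
    obtain ⟨b, ⟨⟨hb1, hb2⟩, hbB⟩, rfl⟩ := hqb
    obtain ⟨c, ⟨⟨hc1, hc2⟩, hcB⟩, rfl⟩ := hqc
    have hxabc : x - a - b - c ∈ ((pair V).orthogonal B).baseChange ℂ := by
      have h1 : x - (a + b + c) ∈ ((pair V).orthogonal B).baseChange ℂ := by
        have hsum' := hsum.symm
        rw [← map_add, ← map_add] at hsum'
        exact (Submodule.Quotient.eq _).mp hsum'
      have he : x - a - b - c = x - (a + b + c) := by abel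
      rw [he]; exact h1
    have hxO := GKAux.indep_aux hsymm hBle hCB hJ1sq hJ2sq horth1 horth2 hcomm hCc1 hCc2
      hs ht hxB (mem_eig.mp hx1) (mem_eig.mp hx2) (mem_eig.mp ha1) (mem_eig.mp ha2)
      (mem_eig.mp hb1) (mem_eig.mp hb2) (mem_eig.mp hc1) (mem_eig.mp hc2) hva hvb hvc hxabc
    rw [hπ0 _ hxO]
    exact zero_mem ⊥
  have hne1 : ∀ {a b : ℂ}, a * b = -1 → a * b ≠ 1 := fun h => GKAux.ne_one_of_eq_neg_one h
  refine ⟨?_, ?_, ?_, ?_, ?_, ?_⟩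
  · -- spanning
    apply le_antisymm
    · simp only [Phi_eq, sup_le_iff]
      exact ⟨⟨⟨Submodule.map_mono inf_le_right, Submodule.map_mono inf_le_right⟩,
        Submodule.map_mono inf_le_right⟩, Submodule.map_mono inf_le_right⟩
    · rintro q hq
      rw [Submodule.mem_map] at hq
      obtain ⟨x, hxB, rfl⟩ := hq
      obtain ⟨z, hzC, w, hwO, rfl⟩ := Submodule.mem_sup.mp (hBcle hxB)
      rw [map_add, hπ0 _ hwO, add_zero]
      have hzdec : (GKAux.proj J₁ Complex.I (GKAux.proj J₂ Complex.I z) +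
          GKAux.proj J₁ (-Complex.I) (GKAux.proj J₂ Complex.I z)) +
          (GKAux.proj J₁ Complex.I (GKAux.proj J₂ (-Complex.I) z) +
          GKAux.proj J₁ (-Complex.I) (GKAux.proj J₂ (-Complex.I) z)) = z := by
        rw [GKAux.proj_sum, GKAux.proj_sum, GKAux.proj_sum]
      have hmem : ∀ (s t : ℂ), s*s = -1 → t*t = -1 →
          ((((pair V).orthogonal B).baseChange ℂ)).mkQ (GKAux.proj J₁ s (GKAux.proj J₂ t z))
            ∈ Phi V B (eig V J₁ s ⊓ eig V J₂ t) := by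
        intro s t hs ht
        rw [mem_Phi]
        exact ⟨_, ⟨⟨mem_eig.mpr (hcompeig1 s t hs z), mem_eig.mpr (hcompeig2 s t ht z)⟩,
          GKAux.baseChange_mono hCB (hcompmem s t z hzC)⟩, rfl⟩
      rw [← hzdec, map_add, map_add, map_add]
      refine add_mem (add_mem ?_ ?_) (add_mem ?_ ?_)
      · exact Submodule.mem_sup_left (Submodule.mem_sup_left
          (Submodule.mem_sup_left (hmem _ _ hI hI)))
      · exact Submodule.mem_sup_left (Submodule.mem_sup_right (hmem _ _ hmI hI))
      · exact Submodule.mem_sup_left (Submodule.mem_sup_left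
          (Submodule.mem_sup_right (hmem _ _ hI hmI)))
      · exact Submodule.mem_sup_right (hmem _ _ hmI hmI)
  · exact hbot _ _ _ _ _ _ _ _ hI hI (Or.inr (hne1 (by linear_combination hI)))
      (Or.inl (hne1 (by linear_combination hI))) (Or.inl (hne1 (by linear_combination hI)))
  · exact hbot _ _ _ _ _ _ _ _ hI hmI (Or.inr (hne1 (by linear_combination hI)))
      (Or.inl (hne1 (by linear_combination hI))) (Or.inl (hne1 (by linear_combination hI)))
  · exact hbot _ _ _ _ _ _ _ _ hmI hI (Or.inl (hne1 (by linear_combination hI)))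
      (Or.inl (hne1 (by linear_combination hI))) (Or.inr (hne1 (by linear_combination hI)))
  · exact hbot _ _ _ _ _ _ _ _ hmI hmI (Or.inl (hne1 (by linear_combination hI)))
      (Or.inl (hne1 (by linear_combination hI))) (Or.inr (hne1 (by linear_combination hI)))
  · intro s t hs' ht'
    have hs : s * s = -1 := by rcases hs' with rfl | rfl; exacts [hI, hmI]
    have ht : t * t = -1 := by rcases ht' with rfl | rfl; exacts [hI, hmI]
    have hns : -s * -s = -1 := by linear_combination hs
    have hnt : -t * -t = -1 := by linear_combination ht
    apply le_antisymm
    · simp only [Phi_eq]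
      exact le_inf (Submodule.map_mono (inf_le_inf_right _ inf_le_left))
        (Submodule.map_mono (inf_le_inf_right _ inf_le_right))
    · intro q hq
      rw [Submodule.mem_inf] at hq
      obtain ⟨hq1, hq2⟩ := hq
      rw [mem_Phi] at hq1 hq2
      obtain ⟨x, ⟨hx1, hxB⟩, rfl⟩ := hq1
      obtain ⟨y, ⟨hy2, hyB⟩, hyq⟩ := hq2
      obtain ⟨c₀, hc0C, w, hwO, hxcw⟩ := Submodule.mem_sup.mp (hBcle hxB)
      have hc0B : c₀ ∈ B.baseChange ℂ := GKAux.baseChange_mono hCB hc0C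
      set za := GKAux.proj J₁ s (GKAux.proj J₂ t c₀) with hzadef
      set zb := GKAux.proj J₁ s (GKAux.proj J₂ (-t) c₀) with hzbdef
      set zc := GKAux.proj J₁ (-s) (GKAux.proj J₂ t c₀) with hzcdef
      set zd := GKAux.proj J₁ (-s) (GKAux.proj J₂ (-t) c₀) with hzddef
      have hzdec : (za + zc) + (zb + zd) = c₀ := by
        rw [hzadef, hzbdef, hzcdef, hzddef, GKAux.proj_sum, GKAux.proj_sum, GKAux.proj_sum]
      have hza1 := hcompeig1 s t hs c₀
      have hza2 := hcompeig2 s t ht c₀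
      have hzb1 := hcompeig1 s (-t) hs c₀
      have hzb2 := hcompeig2 s (-t) hnt c₀
      have hzc1 := hcompeig1 (-s) t hns c₀
      have hzc2 := hcompeig2 (-s) t ht c₀
      have hzd1 := hcompeig1 (-s) (-t) hns c₀
      have hzd2 := hcompeig2 (-s) (-t) hnt c₀
      have hzaC := hcompmem s t c₀ hc0C
      have hzbC := hcompmem s (-t) c₀ hc0C
      have hzcC := hcompmem (-s) t c₀ hc0C
      have hzdC := hcompmem (-s) (-t) c₀ hc0C
      have hx1' : J₁.baseChange ℂ x = s • x := mem_eig.mp hx1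
      have hy2' : J₂.baseChange ℂ y = t • y := mem_eig.mp hy2
      have hOB := GKAux.orth_pair_zero (B := B) hsymm
      have hcmx : c₀ - x ∈ ((pair V).orthogonal B).baseChange ℂ := by
        have he : c₀ - x = -w := by rw [← hxcw]; abel
        rw [he]; exact neg_mem hwO
      have hcmy : c₀ - y ∈ ((pair V).orthogonal B).baseChange ℂ := by
        have hyx : y - x ∈ ((pair V).orthogonal B).baseChange ℂ :=
          (Submodule.Quotient.eq _).mp hyq
        have he : c₀ - y = -(y - x) - w := by rw [← hxcw]; abel
        rw [he]; exact sub_mem (neg_mem hyx) hwO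
      have hzcO : zc ∈ ((pair V).orthogonal B).baseChange ℂ := by
        refine GKAux.mem_orthC_of_eig hsymm hBle hJ1sq hJ2sq horth1 horth2 hcomm hCc1 hCc2
          (GKAux.baseChange_mono hCB hzcC) hns ht hzc1 hzc2 ?_
        intro z hzC hz1 hz2
        rw [neg_neg] at hz1
        have hzB : z ∈ B.baseChange ℂ := GKAux.baseChange_mono hCB hzC
        have hxz := GKAux.eig_orth (pair V) horth1 (hne1 hs) hx1' hz1
        have hwz := GKAux.pairC_zero_of (pair V) hOB hcmx hzB
        have hza0 := GKAux.eig_orth (pair V) horth1 (hne1 hs) hza1 hz1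
        have hzb0 := GKAux.eig_orth (pair V) horth1 (hne1 hs) hzb1 hz1
        have hzd0 := GKAux.eig_orth (pair V) horth2 (hne1 hnt) hzd2 hz2
        have hsplit : GKAux.ΦC (pair V) c₀ z = GKAux.ΦC (pair V) za z
            + GKAux.ΦC (pair V) zc z + (GKAux.ΦC (pair V) zb z + GKAux.ΦC (pair V) zd z) := by
          conv_lhs => rw [← hzdec]
          simp only [map_add, LinearMap.add_apply]
        have hcx : GKAux.ΦC (pair V) (c₀ - x) z =
            GKAux.ΦC (pair V) c₀ z - GKAux.ΦC (pair V) x z := by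
          simp only [map_sub, LinearMap.sub_apply]
        linear_combination -hsplit - hza0 - hzb0 - hzd0 - hcx + hwz + hxz
      have hzdO : zd ∈ ((pair V).orthogonal B).baseChange ℂ := by
        refine GKAux.mem_orthC_of_eig hsymm hBle hJ1sq hJ2sq horth1 horth2 hcomm hCc1 hCc2
          (GKAux.baseChange_mono hCB hzdC) hns hnt hzd1 hzd2 ?_
        intro z hzC hz1 hz2
        rw [neg_neg] at hz1 hz2
        have hzB : z ∈ B.baseChange ℂ := GKAux.baseChange_mono hCB hzC
        have hxz := GKAux.eig_orth (pair V) horth1 (hne1 hs) hx1' hz1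
        have hwz := GKAux.pairC_zero_of (pair V) hOB hcmx hzB
        have hza0 := GKAux.eig_orth (pair V) horth1 (hne1 hs) hza1 hz1
        have hzb0 := GKAux.eig_orth (pair V) horth1 (hne1 hs) hzb1 hz1
        have hzc0 := GKAux.eig_orth (pair V) horth2 (hne1 ht) hzc2 hz2
        have hsplit : GKAux.ΦC (pair V) c₀ z = GKAux.ΦC (pair V) za z
            + GKAux.ΦC (pair V) zc z + (GKAux.ΦC (pair V) zb z + GKAux.ΦC (pair V) zd z) := by
          conv_lhs => rw [← hzdec]
          simp only [map_add, LinearMap.add_apply]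
        have hcx : GKAux.ΦC (pair V) (c₀ - x) z =
            GKAux.ΦC (pair V) c₀ z - GKAux.ΦC (pair V) x z := by
          simp only [map_sub, LinearMap.sub_apply]
        linear_combination -hsplit - hza0 - hzb0 - hzc0 - hcx + hwz + hxz
      have hzbO : zb ∈ ((pair V).orthogonal B).baseChange ℂ := by
        refine GKAux.mem_orthC_of_eig hsymm hBle hJ1sq hJ2sq horth1 horth2 hcomm hCc1 hCc2
          (GKAux.baseChange_mono hCB hzbC) hs hnt hzb1 hzb2 ?_
        intro z hzC hz1 hz2
        rw [neg_neg] at hz2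
        have hzB : z ∈ B.baseChange ℂ := GKAux.baseChange_mono hCB hzC
        have hyz := GKAux.eig_orth (pair V) horth2 (hne1 ht) hy2' hz2
        have hwz := GKAux.pairC_zero_of (pair V) hOB hcmy hzB
        have hza0 := GKAux.eig_orth (pair V) horth2 (hne1 ht) hza2 hz2
        have hzc0 := GKAux.eig_orth (pair V) horth2 (hne1 ht) hzc2 hz2
        have hzd0 := GKAux.eig_orth (pair V) horth1 (hne1 hns) hzd1 hz1
        have hsplit : GKAux.ΦC (pair V) c₀ z = GKAux.ΦC (pair V) za z
            + GKAux.ΦC (pair V) zc z + (GKAux.ΦC (pair V) zb z + GKAux.ΦC (pair V) zd z) := by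
          conv_lhs => rw [← hzdec]
          simp only [map_add, LinearMap.add_apply]
        have hcy : GKAux.ΦC (pair V) (c₀ - y) z =
            GKAux.ΦC (pair V) c₀ z - GKAux.ΦC (pair V) y z := by
          simp only [map_sub, LinearMap.sub_apply]
        linear_combination -hsplit - hza0 - hzc0 - hzd0 - hcy + hwz + hyz
      have hπx : ((((pair V).orthogonal B).baseChange ℂ)).mkQ x
          = ((((pair V).orthogonal B).baseChange ℂ)).mkQ za := by
        conv_lhs => rw [← hxcw, ← hzdec]
        rw [map_add, map_add, map_add, map_add, hπ0 _ hwO, hπ0 _ hzcO, hπ0 _ hzbO,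
          hπ0 _ hzdO]
        abel
      rw [hπx, mem_Phi]
      exact ⟨za, ⟨⟨mem_eig.mpr hza1, mem_eig.mpr hza2⟩, GKAux.baseChange_mono hCB hzaC⟩, rfl⟩
end
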